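/- Fix θ > 0 and A ≥ 1/θ. The function ℓ(x) = 1 + (1+θ)(A − (1+x)/(1+θ)) 𝟙{(1+x)/(1+θ) ≤ A}, defined for x ≥ 0, satisfies the renewal integral equation ℓ(x) = 1 + θ^{-1}(1+θ)^{-1/θ}(1+x)^{1+1/θ} ∫_{(1+x)/(1+θ)}^{A} y^{-2-1/θ} ℓ(y) dy for every x ≥ 0. -/
import Mathlib


open Real MeasureTheory

/-- For θ > 0 and A ≥ 1/θ, the function
`ℓ(x) = 1 + (1+θ)(A − (1+x)/(1+θ)) 𝟙{(1+x)/(1+θ) ≤ A}` satisfies the renewal equation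
`ℓ(x) = 1 + θ⁻¹(1+θ)^{-1/θ}(1+x)^{1+1/θ} ∫_{(1+x)/(1+θ)}^{A} y^{-2-1/θ} ℓ(y) dy`
for every x ≥ 0 (the integral over an empty range being 0). -/
theorem gsr_arl_solves_renewal_equation (θ : ℝ) (hθ : 0 < θ) (A : ℝ) (hA : 1 / θ ≤ A)
    (ℓ : ℝ → ℝ)
    (hℓ : ∀ x : ℝ, ℓ x =
      1 + (1 + θ) * (A - (1 + x) / (1 + θ)) * (if (1 + x) / (1 + θ) ≤ A then 1 else 0)) :
    ∀ x : ℝ, 0 ≤ x →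
      ℓ x = 1 + θ⁻¹ * (1 + θ) ^ (-(1 / θ)) * (1 + x) ^ (1 + 1 / θ)
        * ∫ y in Set.Ioc ((1 + x) / (1 + θ)) A, y ^ (-2 - 1 / θ) * ℓ y := by
  intro x hx
  have hθ1 : (0:ℝ) < 1 + θ := by linarith
  have hA0 : (0:ℝ) < A := lt_of_lt_of_le (by positivity) hA
  have hθA : 1 ≤ θ * A := by
    have := (div_le_iff₀ hθ).mp hA
    linarith [this]
  have hb0 : 0 < (1 + x) / (1 + θ) := by positivity
  by_cases hbA : (1 + x) / (1 + θ) ≤ A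
  · -- nonempty case
    have h0uIcc : (0:ℝ) ∉ Set.uIcc ((1 + x) / (1 + θ)) A := by
      rw [Set.uIcc_of_le hbA]
      intro h; exact absurd h.1 (not_le.2 hb0)
    have hp0 : 0 < 1/θ := by positivity
    rw [show (∫ y in Set.Ioc ((1 + x) / (1 + θ)) A, y ^ (-2 - 1/θ) * ℓ y)
        = ∫ y in (1 + x) / (1 + θ)..A, y ^ (-2 - 1/θ) * ℓ y from
        (intervalIntegral.integral_of_le hbA).symm]
    have hcong : Set.EqOn (fun y => y ^ (-2 - 1/θ) * ℓ y)
        (fun y => (1+θ)*A * y ^ (-2-1/θ) - y ^ (-1-1/θ))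
        (Set.uIcc ((1 + x) / (1 + θ)) A) := by
      intro y hy
      rw [Set.uIcc_of_le hbA] at hy
      have hy0 : 0 < y := lt_of_lt_of_le hb0 hy.1
      have hyA : (1 + y) / (1 + θ) ≤ A := by
        rw [div_le_iff₀ hθ1]; nlinarith [hy.2]
      have hmul : y ^ (-2-1/θ) * y = y ^ (-1-1/θ) := by
        rw [← Real.rpow_add_one hy0.ne']; ring_nf
      simp only
      rw [hℓ y, if_pos hyA, ← hmul]
      field_simp
      ring
    rw [intervalIntegral.integral_congr hcong]
    have hi1 : IntervalIntegrable (fun y : ℝ => y ^ (-2-1/θ)) volume ((1 + x) / (1 + θ)) A :=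
      intervalIntegral.intervalIntegrable_rpow (Or.inr h0uIcc)
    have hi2 : IntervalIntegrable (fun y : ℝ => y ^ (-1-1/θ)) volume ((1 + x) / (1 + θ)) A :=
      intervalIntegral.intervalIntegrable_rpow (Or.inr h0uIcc)
    rw [intervalIntegral.integral_sub (hi1.const_mul _) hi2,
      intervalIntegral.integral_const_mul]
    have hI1 : (∫ y in (1 + x) / (1 + θ)..A, y ^ (-2-1/θ))
        = (A ^ (-1-1/θ) - ((1 + x) / (1 + θ)) ^ (-1-1/θ)) / (-1-1/θ) := by
      rw [integral_rpow (Or.inr ⟨by intro h; linarith, h0uIcc⟩)]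
      have h' : -2 - 1/θ + 1 = -1 - 1/θ := by ring
      rw [h']
    have hI2 : (∫ y in (1 + x) / (1 + θ)..A, y ^ (-1-1/θ))
        = (A ^ (-(1/θ)) - ((1 + x) / (1 + θ)) ^ (-(1/θ))) / (-(1/θ)) := by
      rw [integral_rpow (Or.inr ⟨by intro h; linarith, h0uIcc⟩)]
      have h' : -1 - 1/θ + 1 = -(1/θ) := by ring
      rw [h']
    rw [hI1, hI2]
    have h5 : (1 + x) ^ (1 + 1/θ) = (1+θ) ^ (1+1/θ) * ((1 + x) / (1 + θ)) ^ (1+1/θ) := by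
      rw [← Real.mul_rpow hθ1.le hb0.le]
      congr 1
      field_simp
    have h4 : (1+θ) ^ (-(1/θ)) * (1+θ) ^ (1+1/θ) = 1 + θ := by
      rw [← Real.rpow_add hθ1]
      norm_num
    have h1 : ((1 + x) / (1 + θ)) ^ (1+1/θ) * ((1 + x) / (1 + θ)) ^ (-1-1/θ) = 1 := by
      rw [← Real.rpow_add hb0]
      norm_num
    have h2 : ((1 + x) / (1 + θ)) ^ (1+1/θ) * ((1 + x) / (1 + θ)) ^ (-(1/θ))
        = (1 + x) / (1 + θ) := by
      rw [← Real.rpow_add hb0]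
      norm_num
    have h3 : A * A ^ (-1-1/θ) = A ^ (-(1/θ)) := by
      nth_rewrite 1 [← Real.rpow_one A]
      rw [← Real.rpow_add hA0]; congr 1; ring
    rw [hℓ x, if_pos hbA, h5]
    generalize hβ : A ^ (-1-1/θ : ℝ) = β at h3 ⊢
    generalize hα : A ^ (-(1/θ) : ℝ) = α at h3 ⊢
    generalize hu : ((1 + x) / (1 + θ)) ^ (1+1/θ : ℝ) = u at h1 h2 ⊢
    generalize hv : ((1 + x) / (1 + θ)) ^ (-1-1/θ : ℝ) = v at h1 ⊢
    generalize hw : ((1 + x) / (1 + θ)) ^ (-(1/θ) : ℝ) = w at h2 ⊢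
    generalize hP : (1+θ) ^ (-(1/θ) : ℝ) = P at h4 ⊢
    generalize hQ : (1+θ) ^ (1+1/θ : ℝ) = Q at h4 ⊢
    generalize hbb : (1 + x) / (1 + θ) = b at h2 hbA hb0 ⊢
    have hne1 : (-1 - 1/θ) ≠ (0:ℝ) := by intro h; linarith
    have hne2 : (-(1/θ)) ≠ (0:ℝ) := by intro h; linarith
    have ht : (1/θ) * θ = 1 := one_div_mul_cancel hθ.ne'
    have hbr : (1+θ)*A*((β - v)/(-1-1/θ)) - (α - w)/(-(1/θ)) = θ*(A*v - w) := by
      rw [← mul_div_assoc, div_sub_div _ _ hne1 hne2, div_eq_iff (mul_ne_zero hne1 hne2)]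
      linear_combination (-(A*(β - v)) - (1+1/θ)*(A*v - w))*ht + (-(1+1/θ))*h3
    rw [hbr]
    have hinv : θ⁻¹ * θ = 1 := inv_mul_cancel₀ hθ.ne'
    linear_combination (-(P*Q*u*(A*v-w)))*hinv + (-(u*(A*v-w)))*h4
      + (-(1+θ)*A)*h1 + (1+θ)*h2
  · -- empty case
    have : Set.Ioc ((1 + x) / (1 + θ)) A = ∅ := Set.Ioc_eq_empty (not_lt.2 (le_of_not_ge hbA))
    rw [this]
    simp only [Measure.restrict_empty, integral_zero_measure, mul_zero, add_zero]
    rw [hℓ x, if_neg hbA]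
    ring
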